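/- arXiv:2210.02825 — 4 statements merged into one kernel-verified Lean document; each statement's English description precedes it below -/
import Mathlib

section
/- Let n ≥ 1 and let e : Fin n → ℕ be a function with e i ≥ 1 for all i. Let m be an integer with 0 < m ≤ ∑ i, e i. Then there exists a nonempty subset S ⊆ Fin n such that m ≤ ∑_{i ∈ S} e i and (∑_{i ∈ S} e i) − m < min_{i ∈ S} e i. -/
/-- Combinatorial selection step in Bierstone–Milman's resolution algorithm for
binomial hypersurface singularities: one can choose a nonempty subset `S` of the
indices whose exponent sum exceeds `m` by less than the minimal exponent in `S`. -/
theorem stmt_0 (n : ℕ) (hn : 1 ≤ n) (e : Fin n → ℕ) (he : ∀ i, 1 ≤ e i)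
    (m : ℕ) (hm0 : 0 < m) (hm : m ≤ ∑ i, e i) :
    ∃ S : Finset (Fin n), ∃ hS : S.Nonempty,
      m ≤ ∑ i ∈ S, e i ∧ (∑ i ∈ S, e i) - m < S.inf' hS e := by
  classical
  set T : Finset (Finset (Fin n)) :=
    Finset.univ.filter (fun S => S.Nonempty ∧ m ≤ ∑ i ∈ S, e i) with hT
  have hunivne : (Finset.univ : Finset (Fin n)).Nonempty := by
    rw [Finset.univ_nonempty_iff]
    exact Fin.pos_iff_nonempty.mp hn
  have hTne : T.Nonempty := ⟨Finset.univ, by simp [hT, hunivne, hm]⟩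
  obtain ⟨S, hSmem, hSmin⟩ := T.exists_min_image (fun S => ∑ i ∈ S, e i) hTne
  rw [hT, Finset.mem_filter] at hSmem
  obtain ⟨-, hSne, hSm⟩ := hSmem
  obtain ⟨i₀, hi₀, hmin⟩ := S.exists_mem_eq_inf' hSne e
  refine ⟨S, hSne, hSm, ?_⟩
  have hsum : ∑ i ∈ S.erase i₀, e i + e i₀ = ∑ i ∈ S, e i :=
    Finset.sum_erase_add S e hi₀
  have herase : ∑ i ∈ S.erase i₀, e i < m := by
    by_contra h
    push_neg at h
    rcases (S.erase i₀).eq_empty_or_nonempty with he' | hne'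
    · simp [he'] at h; omega
    · have hmem : S.erase i₀ ∈ T := by
        rw [hT, Finset.mem_filter]
        exact ⟨Finset.mem_univ _, hne', h⟩
      have := hSmin _ hmem
      have h1 := he i₀
      omega
  have h1 := he i₀
  rw [hmin]
  omega
end

section
/- Let r ≥ 2 be a natural number and q a natural number with 1 ≤ q < r and gcd(q, r) = 1. Then the following are equivalent: (a) for every j with 1 ≤ j ≤ r − 1, one has (j mod r) + ((j·q) mod r) ≥ r; (b) q = r − 1. -/
/-- Reid–Tai criterion arithmetic for the cyclic quotient surface singularity
`ℂ²/(1/r)(1,q)`: every nontrivial element has age at least `1` iff `q = r - 1`. -/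
theorem stmt_1 (r q : ℕ) (hr : 2 ≤ r) (hq1 : 1 ≤ q) (hqr : q < r)
    (hgcd : Nat.gcd q r = 1) :
    (∀ j, 1 ≤ j → j ≤ r - 1 → r ≤ j % r + (j * q) % r) ↔ q = r - 1 := by
  constructor
  · intro h
    have h1 := h 1 le_rfl (by omega)
    rw [Nat.one_mul, Nat.mod_eq_of_lt (by omega), Nat.mod_eq_of_lt hqr] at h1
    omega
  · intro hq j hj1 hj2
    subst hq
    have hjr : j < r := by omega
    rw [Nat.mod_eq_of_lt hjr]
    have h1 : j * (r - 1) + j = j * r := by rw [← Nat.mul_succ]; congr 1; omega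
    have h2 : (j - 1) * r + r = j * r := by rw [← Nat.succ_mul]; congr 1; omega
    have : j * (r - 1) = (r - j) + (j - 1) * r := by omega
    rw [this, Nat.add_mul_mod_self_right, Nat.mod_eq_of_lt (by omega)]
    omega
end

section
/- Work in the multivariate polynomial ring R = k[x₁,…,xₙ, y₁,…,y_m] over a commutative ring k. Let e i ≥ 1 and f j ≥ 1 be positive integer exponents, let S ⊆ {1,…,n} be a subset containing 1, and let β : R → R be the k-algebra homomorphism with β(xᵢ) = x₁·xᵢ for i ∈ S, i ≠ 1, β(x₁) = x₁, β(yⱼ) = x₁·yⱼ for all j, and β fixing all other variables. Set σ = ∑_{i∈S} e i and φ = ∑_j f j. Then β(∏ᵢ xᵢ^{eᵢ} − ∏ⱼ yⱼ^{fⱼ}) = x₁^{min(σ, φ)} · B', where B' = x₁^{σ−min(σ,φ)}·∏_{i≥2} xᵢ^{eᵢ} − x₁^{φ−min(σ,φ)}·∏ⱼ yⱼ^{fⱼ} is not divisible by x₁. -/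
open MvPolynomial

lemma aux_prod_monomial {k : Type*} [CommRing k] {ι κ : Type*} (s : Finset ι) (v : ι → κ)
    (e : ι → ℕ) :
    ∏ i ∈ s, (X (v i) : MvPolynomial κ k) ^ e i
      = monomial (∑ i ∈ s, Finsupp.single (v i) (e i)) 1 := by
  induction s using Finset.cons_induction with
  | empty => simp
  | cons a s ha ih =>
    rw [Finset.prod_cons, Finset.sum_cons, ih, X_pow_eq_monomial, monomial_mul, one_mul]

/-- Strict transform of the binomial hypersurface
`x₁^{e₁}⋯xₙ^{eₙ} = y₁^{f₁}⋯y_m^{f_m}` on the chart `X₁ ≠ 0` of the blow-up of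
affine space along `V(xᵢ : i ∈ S; y₁,…,y_m)`: the total transform factors as
`x₁^{min(σ,φ)} · B'` where `B'` is not divisible by `x₁`.  The distinguished
variable `x₁` is indexed by `i₁ = ⟨0, hn⟩ ∈ S`; variables `xᵢ` are `X (Sum.inl i)`
and `yⱼ` are `X (Sum.inr j)`. -/
theorem stmt_3 (k : Type*) [CommRing k] [Nontrivial k] (n m : ℕ) (hn : 0 < n)
    (e : Fin n → ℕ) (f : Fin m → ℕ) (he : ∀ i, 1 ≤ e i) (hf : ∀ j, 1 ≤ f j)
    (S : Finset (Fin n)) (h1S : (⟨0, hn⟩ : Fin n) ∈ S) :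
    let i₁ : Fin n := ⟨0, hn⟩
    let R := MvPolynomial (Fin n ⊕ Fin m) k
    let β : R →ₐ[k] R := aeval (fun v => match v with
      | Sum.inl i => if i ∈ S ∧ i ≠ i₁ then X (Sum.inl i₁) * X (Sum.inl i)
          else X (Sum.inl i)
      | Sum.inr j => X (Sum.inl i₁) * X (Sum.inr j))
    let σ : ℕ := ∑ i ∈ S, e i
    let φ : ℕ := ∑ j, f j
    let B' : R := X (Sum.inl i₁) ^ (σ - min σ φ) *
        ∏ i ∈ Finset.univ.erase i₁, X (Sum.inl i) ^ e i -
      X (Sum.inl i₁) ^ (φ - min σ φ) * ∏ j, X (Sum.inr j) ^ f j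
    β (∏ i, X (Sum.inl i) ^ e i - ∏ j, X (Sum.inr j) ^ f j) =
        X (Sum.inl i₁) ^ min σ φ * B' ∧
      ¬ (X (Sum.inl i₁) ∣ B') := by
  intro i₁ R β σ φ B'
  set x1 : R := X (Sum.inl i₁) with hx1
  set A : R := ∏ i ∈ Finset.univ.erase i₁, X (Sum.inl i) ^ e i with hA
  set C : R := ∏ j, (X (Sum.inr j) : R) ^ f j with hC
  have hβx : ∀ i : Fin n, β (X (Sum.inl i)) =
      if i ∈ S ∧ i ≠ i₁ then x1 * X (Sum.inl i) else X (Sum.inl i) := fun i => aeval_X _ _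
  have hβy : ∀ j : Fin m, β (X (Sum.inr j)) = x1 * X (Sum.inr j) := fun j => aeval_X _ _
  -- Step A
  have stepA : β (∏ i, X (Sum.inl i) ^ e i) = x1 ^ σ * A := by
    rw [map_prod]
    have h1 : ∀ i ∈ Finset.univ, β (X (Sum.inl i) ^ e i)
        = x1 ^ (if i ∈ S then e i else 0) *
          (if i = i₁ then (1 : R) else X (Sum.inl i)) ^ e i := by
      intro i _
      rw [map_pow, hβx i]
      have hi₁S : i₁ ∈ S := h1S
      by_cases h1 : i = i₁
      · subst h1
        simp [hi₁S, hx1]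
      · by_cases h2 : i ∈ S
        · simp [h1, h2, mul_pow]
        · simp [h1, h2]
    rw [Finset.prod_congr rfl h1, Finset.prod_mul_distrib, Finset.prod_pow_eq_pow_sum]
    congr 1
    · congr 1
      rw [Finset.sum_ite_mem, Finset.univ_inter]
    · rw [← Finset.prod_erase_mul _ _ (Finset.mem_univ i₁), if_pos rfl, one_pow, mul_one]
      exact Finset.prod_congr rfl fun i hi => by
        rw [if_neg (Finset.ne_of_mem_erase hi)]
  -- Step B
  have stepB : β (∏ j, X (Sum.inr j) ^ f j) = x1 ^ φ * C := by
    rw [map_prod]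
    have h1 : ∀ j ∈ Finset.univ, β (X (Sum.inr j) ^ f j)
        = x1 ^ f j * X (Sum.inr j) ^ f j := by
      intro j _
      rw [map_pow, hβy j, mul_pow]
    rw [Finset.prod_congr rfl h1, Finset.prod_mul_distrib, Finset.prod_pow_eq_pow_sum]
  have hσ : min σ φ + (σ - min σ φ) = σ := Nat.add_sub_cancel' (min_le_left _ _)
  have hφ : min σ φ + (φ - min σ φ) = φ := Nat.add_sub_cancel' (min_le_right _ _)
  have hB' : B' = x1 ^ (σ - min σ φ) * A - x1 ^ (φ - min σ φ) * C := rfl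
  constructor
  · rw [map_sub, stepA, stepB, hB']
    rw [mul_sub, ← mul_assoc, ← mul_assoc, ← pow_add, ← pow_add, hσ, hφ]
  · -- non-divisibility
    rintro ⟨q, hq⟩
    set g : Fin n ⊕ Fin m → R := fun v =>
      if v = Sum.inl i₁ then 0 else X v with hg
    set h : R →ₐ[k] R := aeval g with hh
    have hzero : h B' = 0 := by
      rw [hq, map_mul]
      have : h x1 = 0 := by rw [hx1, hh]; rw [aeval_X]; simp [hg]
      rw [this, zero_mul]
    have hX : ∀ v : Fin n ⊕ Fin m, v ≠ Sum.inl i₁ → h (X v) = X v := by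
      intro v hv
      rw [hh, aeval_X, hg]
      simp [hv]
    have hA' : h A = A := by
      rw [hA, map_prod]
      refine Finset.prod_congr rfl fun i hi => ?_
      rw [map_pow, hX _ (by simp [Finset.ne_of_mem_erase hi])]
    have hC' : h C = C := by
      rw [hC, map_prod]
      refine Finset.prod_congr rfl fun j _ => ?_
      rw [map_pow, hX _ (by simp)]
    have hx0 : h x1 = 0 := by rw [hx1, hh, aeval_X]; simp [hg]
    have hval : h B' = (0 : R) ^ (σ - min σ φ) * A - (0 : R) ^ (φ - min σ φ) * C := by
      rw [hB', map_sub, map_mul, map_mul, map_pow, map_pow, hx0, hA', hC']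
    rw [hval] at hzero
    -- monomial forms
    have hAm : A = monomial (∑ i ∈ Finset.univ.erase i₁,
        Finsupp.single (Sum.inl i : Fin n ⊕ Fin m) (e i)) 1 := aux_prod_monomial _ _ _
    have hCm : C = monomial (∑ j, Finsupp.single (Sum.inr j : Fin n ⊕ Fin m) (f j)) 1 :=
      aux_prod_monomial _ _ _
    set dA := ∑ i ∈ Finset.univ.erase i₁, Finsupp.single (Sum.inl i : Fin n ⊕ Fin m) (e i)
    set dC := ∑ j, Finsupp.single (Sum.inr j : Fin n ⊕ Fin m) (f j)
    have hσ1 : 1 ≤ σ := le_trans (he i₁) (Finset.single_le_sum (fun i _ => Nat.zero_le _) h1S)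
    rcases lt_trichotomy σ φ with hlt | heq | hgt
    · -- min = σ, σ - min = 0, φ - min > 0
      rw [min_eq_left hlt.le, Nat.sub_self, pow_zero, one_mul,
        zero_pow (by omega), zero_mul, sub_zero, hAm] at hzero
      exact one_ne_zero ((monomial_eq_zero).mp hzero)
    · -- σ = φ
      have hm : 0 < m := by
        by_contra hm
        have : φ = 0 :=
          Finset.sum_eq_zero fun j _ => absurd j.2 (by omega)
        omega
      rw [heq, min_self, Nat.sub_self, pow_zero, one_mul, one_mul, hAm, hCm] at hzero
      have hdne : dA ≠ dC := by
        intro hd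
        have h1 : dA (Sum.inr ⟨0, hm⟩) = 0 := by
          simp [dA, Finsupp.single_apply]
        have h2 : dC (Sum.inr ⟨0, hm⟩) = f ⟨0, hm⟩ := by
          simp [dC, Finsupp.single_apply]
        rw [hd, h2] at h1
        exact absurd h1 (by have := hf ⟨0, hm⟩; omega)
      have := congrArg (coeff dC) hzero
      rw [coeff_sub, coeff_monomial, coeff_monomial, if_neg hdne, if_pos rfl, coeff_zero] at this
      simp at this
    · -- φ < σ
      rw [min_eq_right hgt.le, Nat.sub_self, pow_zero, one_mul,
        zero_pow (by omega), zero_mul, zero_sub, hCm] at hzero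
      exact one_ne_zero ((monomial_eq_zero).mp (neg_eq_zero.mp hzero))
end

section
/- Let k be a field and r ≥ 1. Consider the polynomial ring k[z, w] and the subalgebra A generated by z^r, w^r, and z·w. Then the kernel of the k-algebra homomorphism k[u, v, t] → k[z, w] sending u ↦ z^r, v ↦ w^r, t ↦ z·w is the ideal generated by u·v − t^r. In particular, A ≅ k[u, v, t]/(uv − t^r). -/
/-! Modulo `uv - t^r` the monomial `u^a v^b t^c` is congruent to `u^(a-d) v^(b-d) t^(rd+c)`,
`d = min a b`, which is determined by its image `z^(ra+c) w^(rb+c)`: for `z^m w^n` and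
`c' = min m n` it is `u^((m-c')/r) v^((n-c')/r) t^c'`. Extended linearly, this recipe inverts
`u ↦ z^r, v ↦ w^r, t ↦ zw` modulo `uv - t^r`, so the kernel lies in `(uv - t^r)`. -/

open MvPolynomial

theorem Ideal.pow_mul_pow_sub_mem_span_mul_sub {R : Type*} [CommRing R] (x y w : R)
    {a b d : ℕ} (hda : d ≤ a) (hdb : d ≤ b) :
    x ^ a * y ^ b - x ^ (a - d) * y ^ (b - d) * w ^ d ∈ Ideal.span {x * y - w} := by
  rw [Ideal.mem_span_singleton]
  obtain ⟨q, hq⟩ := sub_dvd_pow_sub_pow (x * y) w d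
  refine ⟨x ^ (a - d) * y ^ (b - d) * q, ?_⟩
  rw [← Nat.sub_add_cancel hda, ← Nat.sub_add_cancel hdb, Nat.add_sub_cancel, Nat.add_sub_cancel]
  linear_combination (x ^ (a - d) * y ^ (b - d)) * hq

namespace MvPolynomial

variable {k : Type*} [CommRing k]

theorem monomial_fin_three (e : Fin 3 →₀ ℕ) (a : k) :
    monomial e a = C a * X 0 ^ e 0 * X 1 ^ e 1 * X 2 ^ e 2 := by
  rw [monomial_eq, Finsupp.prod_fintype _ _ fun _ => pow_zero _, Fin.prod_univ_three]
  ring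

theorem C_mul_X_pow_mul_X_pow_fin_two (m n : ℕ) (a : k) :
    (C a * X 0 ^ m * X 1 ^ n : MvPolynomial (Fin 2) k) =
      monomial (Finsupp.single 0 m + Finsupp.single 1 n) a := by
  rw [X_pow_eq_monomial, X_pow_eq_monomial, mul_assoc, monomial_mul, C_mul_monomial, mul_one,
    mul_one]

variable (k) in
noncomputable def cyclicInvariantsHom (r : ℕ) :
    MvPolynomial (Fin 3) k →ₐ[k] MvPolynomial (Fin 2) k :=
  aeval ![X 0 ^ r, X 1 ^ r, X 0 * X 1]

theorem cyclicInvariantsHom_monomial (r : ℕ) (e : Fin 3 →₀ ℕ) (a : k) :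
    cyclicInvariantsHom k r (monomial e a) =
      C a * X 0 ^ (r * e 0 + e 2) * X 1 ^ (r * e 1 + e 2) := by
  rw [cyclicInvariantsHom, monomial_fin_three]
  simp only [map_mul, map_pow, aeval_C, aeval_X, algebraMap_eq, Matrix.cons_val_zero,
    Matrix.cons_val_one, Matrix.cons_val_two, Matrix.head_cons, Matrix.tail_cons]
  ring

/-- The divisions by `r` are exact on the monomials `z^(ra+c) w^(rb+c)` of the image, the only ones
that matter. -/
noncomputable def cyclicInvariantsSectionMonomial (r m n : ℕ) : MvPolynomial (Fin 3) k :=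
  X 0 ^ ((m - min m n) / r) * X 1 ^ ((n - min m n) / r) * X 2 ^ min m n

theorem cyclicInvariantsSectionMonomial_mul_add {r : ℕ} (hr : 0 < r) (a b c : ℕ) :
    (cyclicInvariantsSectionMonomial r (r * a + c) (r * b + c) : MvPolynomial (Fin 3) k) =
      X 0 ^ (a - min a b) * X 1 ^ (b - min a b) * X 2 ^ (r * min a b + c) := by
  have hmin : min (r * a + c) (r * b + c) = r * min a b + c := by
    rw [min_add_add_right, Nat.mul_min_mul_left]
  have hdiv (x : ℕ) : (r * x + c - (r * min a b + c)) / r = x - min a b := by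
    rw [Nat.add_sub_add_right, ← Nat.mul_sub, Nat.mul_div_cancel_left _ hr]
  rw [cyclicInvariantsSectionMonomial, hmin, hdiv, hdiv]

noncomputable def cyclicInvariantsSection (r : ℕ) :
    MvPolynomial (Fin 2) k →ₗ[k] MvPolynomial (Fin 3) k :=
  (basisMonomials (Fin 2) k).constr k fun f => cyclicInvariantsSectionMonomial r (f 0) (f 1)

theorem cyclicInvariantsSection_C_mul_X_pow_mul_X_pow (r m n : ℕ) (a : k) :
    cyclicInvariantsSection r (C a * X 0 ^ m * X 1 ^ n) =
      C a * cyclicInvariantsSectionMonomial r m n := by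
  have hbasis : (C a * X 0 ^ m * X 1 ^ n : MvPolynomial (Fin 2) k) =
      a • basisMonomials (Fin 2) k (Finsupp.single 0 m + Finsupp.single 1 n) := by
    rw [C_mul_X_pow_mul_X_pow_fin_two, coe_basisMonomials, smul_monomial, smul_eq_mul, mul_one]
  rw [hbasis, map_smul, cyclicInvariantsSection, Module.Basis.constr_basis, smul_eq_C_mul]
  simp

theorem sub_cyclicInvariantsSection_cyclicInvariantsHom_mem {r : ℕ} (hr : 0 < r)
    (p : MvPolynomial (Fin 3) k) :
    p - cyclicInvariantsSection r (cyclicInvariantsHom k r p) ∈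
      Ideal.span {X 0 * X 1 - X 2 ^ r} := by
  induction p using MvPolynomial.induction_on' with
  | monomial e a =>
    rw [cyclicInvariantsHom_monomial, cyclicInvariantsSection_C_mul_X_pow_mul_X_pow,
      cyclicInvariantsSectionMonomial_mul_add hr, monomial_fin_three]
    set d := min (e 0) (e 1)
    have hfactor : (C a * X 0 ^ e 0 * X 1 ^ e 1 * X 2 ^ e 2 -
        C a * (X 0 ^ (e 0 - d) * X 1 ^ (e 1 - d) * X 2 ^ (r * d + e 2)) :
          MvPolynomial (Fin 3) k) =
        C a * X 2 ^ e 2 *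
          (X 0 ^ e 0 * X 1 ^ e 1 - X 0 ^ (e 0 - d) * X 1 ^ (e 1 - d) * (X 2 ^ r) ^ d) := by
      ring
    rw [hfactor]
    exact Ideal.mul_mem_left _ _ (Ideal.pow_mul_pow_sub_mem_span_mul_sub _ _ _
      (min_le_left _ _) (min_le_right _ _))
  | add p q hp hq =>
    rw [map_add, map_add, add_sub_add_comm]
    exact add_mem hp hq

theorem ker_cyclicInvariantsHom {r : ℕ} (hr : 0 < r) :
    RingHom.ker (cyclicInvariantsHom k r) = Ideal.span {X 0 * X 1 - X 2 ^ r} := by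
  refine le_antisymm (fun p hp => ?_) ?_
  · simpa [RingHom.mem_ker.mp hp] using sub_cyclicInvariantsSection_cyclicInvariantsHom_mem hr p
  · rw [Ideal.span_le, Set.singleton_subset_iff]
    simp [cyclicInvariantsHom, mul_pow]

theorem range_cyclicInvariantsHom (r : ℕ) :
    (cyclicInvariantsHom k r).range = Algebra.adjoin k {X 0 ^ r, X 1 ^ r, X 0 * X 1} := by
  rw [cyclicInvariantsHom, ← Algebra.adjoin_range_eq_range_aeval, Matrix.range_cons,
    Matrix.range_cons_cons_empty, Set.singleton_union]

end MvPolynomial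

/-- The kernel of `k[u,v,t] → k[z,w]`, `u ↦ z^r`, `v ↦ w^r`, `t ↦ zw`, is the
ideal `(uv - t^r)`; in particular the subalgebra `A = k[z^r, w^r, zw]` is
isomorphic to `k[u,v,t]/(uv - t^r)` (the `A_{r-1}` singularity). -/
theorem stmt_6 (k : Type) [Field k] (r : ℕ) (hr : 1 ≤ r) :
    RingHom.ker (aeval (R := k)
        (![X 0 ^ r, X 1 ^ r, X 0 * X 1] : Fin 3 → MvPolynomial (Fin 2) k)).toRingHom =
      Ideal.span {(X 0 * X 1 - X 2 ^ r : MvPolynomial (Fin 3) k)} ∧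
    Nonempty ((MvPolynomial (Fin 3) k ⧸
        Ideal.span {(X 0 * X 1 - X 2 ^ r : MvPolynomial (Fin 3) k)}) ≃ₐ[k]
      Algebra.adjoin k {(X 0 ^ r : MvPolynomial (Fin 2) k), X 1 ^ r, X 0 * X 1}) := by
  refine ⟨ker_cyclicInvariantsHom hr, ?_⟩
  rw [← ker_cyclicInvariantsHom hr, ← range_cyclicInvariantsHom]
  exact ⟨Ideal.quotientKerEquivRange _⟩
end
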